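/- Let G=(V,E) be an arbitrary connected simple graph (not necessarily finite) containing a directed cycle C, and let X_0 : V → ℤ/3ℤ be an initial 3-coloring whose contour integral ∮_C dX_0 is nonzero. Then the activity α of the 3-color CCA trajectory (X_t)_{t≥0} satisfies α ≥ |∮_C dX_0| / |V(C)|. -/

import Mathlib

noncomputable section
attribute [local instance] Classical.propDecidable

open Filter

variable {V : Type*}

/-- Unique representative in `{-1,0,1}` of an element of `ℤ/3ℤ`. -/
def ZMod.repInt (a : ZMod 3) : ℤ := if a = 0 then 0 else if a = 1 then 1 else -1

/-- One step of the 3-color cyclic cellular automaton. -/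
def ccaStep (G : SimpleGraph V) (X : V → ZMod 3) : V → ZMod 3 :=
  fun v => if ∃ u, G.Adj v u ∧ X u = X v + 1 then X v + 1 else X v

/-- The CCA trajectory started from `X₀`. -/
def ccaTraj (G : SimpleGraph V) (X₀ : V → ZMod 3) : ℕ → V → ZMod 3 :=
  fun t => (ccaStep G)^[t] X₀

/-- A vertex is excited at time `t` for CCA iff its color advances. -/
def ccaExcited (G : SimpleGraph V) (X₀ : V → ZMod 3) (t : ℕ) (v : V) : Prop :=
  ccaTraj G X₀ (t + 1) v = ccaTraj G X₀ t v + 1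

/-- Number of excitations of `x` at times `0, …, t-1` (CCA). -/
def ccaNe (G : SimpleGraph V) (X₀ : V → ZMod 3) (t : ℕ) (x : V) : ℕ :=
  ((Finset.range t).filter fun s => ccaExcited G X₀ s x).card

/-- The CCA 1-form `dX` on ordered pairs of vertices. -/
def dXcca (X : V → ZMod 3) (u v : V) : ℤ := (X v - X u).repInt

/-- Path integral of the CCA 1-form along a walk. -/
def walkIntCCA {G : SimpleGraph V} (X : V → ZMod 3) {x y : V} (w : G.Walk x y) : ℤ :=
  (w.darts.map fun d => dXcca X d.toProd.1 d.toProd.2).sum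

/-! Along an edge `(u, v)` one step of the automaton changes `dX(u, v)` by exactly
`[v excited] - [u excited]`, so `dX_t(u, v) = dX_0(u, v) + ne_t(v) - ne_t(u)`. Consequently the
integral `k` of `dX_t` around the closed walk `c` does not depend on `t`, and excitation counts at
adjacent vertices differ by at most `2`. A dart `(u, v)` with `dX_t(u, v) = 1` forces `u` to be
excited at time `t`, so for `k ≥ 0` (reverse `c` otherwise) at least `k` tails of darts of `c` fire
at every step: `k t ≤ ∑_{d ∈ c} ne_t(d.fst) ≤ |c| (ne_t(x) + const)`. -/

namespace ZMod

lemma eq_zero_or_one_or_two (a : ZMod 3) : a = 0 ∨ a = 1 ∨ a = 2 := by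
  revert a; decide

lemma abs_repInt_le_one (a : ZMod 3) : |a.repInt| ≤ 1 := by
  grind [repInt]

lemma repInt_neg (a : ZMod 3) : (-a).repInt = -a.repInt := by
  have := eq_zero_or_one_or_two a
  grind [repInt]

lemma repInt_sub_le (a b : ZMod 3) : (b - a).repInt ≤ if b = a + 1 then 1 else 0 := by
  grind [repInt]

-- `a, b` are the colours at the ends of an edge before a CCA step and `a', b'` after it.
lemma repInt_sub_step {a b a' b' : ZMod 3} (ha : a' = a ∨ a' = a + 1)
    (hb : b' = b ∨ b' = b + 1) (hab : b = a + 1 → a' = a + 1) (hba : a = b + 1 → b' = b + 1) :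
    (b' - a').repInt =
      (b - a).repInt + (if b' = b + 1 then 1 else 0) - (if a' = a + 1 then 1 else 0) := by
  have := eq_zero_or_one_or_two (b - a)
  grind [repInt]

end ZMod

section CCA

open SimpleGraph

variable {G : SimpleGraph V} {X X₀ : V → ZMod 3} {t : ℕ} {u v w x : V}

lemma dXcca_swap (X : V → ZMod 3) (u v : V) : dXcca X v u = -dXcca X u v := by
  rw [dXcca, dXcca, ← neg_sub, ZMod.repInt_neg]

lemma abs_dXcca_le_one (X : V → ZMod 3) (u v : V) : |dXcca X u v| ≤ 1 :=
  ZMod.abs_repInt_le_one _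

lemma ccaStep_eq_or (G : SimpleGraph V) (X : V → ZMod 3) (v : V) :
    ccaStep G X v = X v ∨ ccaStep G X v = X v + 1 := by
  unfold ccaStep
  split_ifs
  exacts [Or.inr rfl, Or.inl rfl]

lemma ccaStep_eq_add_one_of_adj (h : G.Adj u w) (hw : X w = X u + 1) :
    ccaStep G X u = X u + 1 :=
  if_pos ⟨w, h, hw⟩

lemma dXcca_ccaStep (h : G.Adj u v) :
    dXcca (ccaStep G X) u v = dXcca X u v + (if ccaStep G X v = X v + 1 then 1 else 0)
      - (if ccaStep G X u = X u + 1 then 1 else 0) :=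
  ZMod.repInt_sub_step (ccaStep_eq_or G X u) (ccaStep_eq_or G X v)
    (ccaStep_eq_add_one_of_adj h) (ccaStep_eq_add_one_of_adj h.symm)

lemma dXcca_le_of_adj (h : G.Adj u v) :
    dXcca X u v ≤ if ccaStep G X u = X u + 1 then 1 else 0 := by
  refine (ZMod.repInt_sub_le (X u) (X v)).trans ?_
  split_ifs with hv hu hu
  · rfl
  · exact absurd (ccaStep_eq_add_one_of_adj h hv) hu
  · exact zero_le_one
  · rfl

lemma ccaTraj_succ (G : SimpleGraph V) (X₀ : V → ZMod 3) (t : ℕ) :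
    ccaTraj G X₀ (t + 1) = ccaStep G (ccaTraj G X₀ t) :=
  Function.iterate_succ_apply' _ _ _

lemma ccaExcited_iff :
    ccaExcited G X₀ t v ↔ ccaStep G (ccaTraj G X₀ t) v = ccaTraj G X₀ t v + 1 := by
  rw [ccaExcited, ccaTraj_succ]

lemma ccaNe_le (G : SimpleGraph V) (X₀ : V → ZMod 3) (t : ℕ) (x : V) : ccaNe G X₀ t x ≤ t :=
  (Finset.card_filter_le _ _).trans (Finset.card_range t).le

lemma ccaNe_succ (G : SimpleGraph V) (X₀ : V → ZMod 3) (t : ℕ) (x : V) :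
    (ccaNe G X₀ (t + 1) x : ℤ) = ccaNe G X₀ t x + if ccaExcited G X₀ t x then 1 else 0 := by
  simp only [ccaNe, Finset.natCast_card_filter, Finset.sum_range_succ]

lemma dXcca_ccaTraj (h : G.Adj u v) (t : ℕ) :
    dXcca (ccaTraj G X₀ t) u v = dXcca X₀ u v + ccaNe G X₀ t v - ccaNe G X₀ t u := by
  induction t with
  | zero => simp [ccaTraj, ccaNe]
  | succ t ih =>
    simp only [ccaTraj_succ, dXcca_ccaStep h, ih, ccaNe_succ, ccaExcited_iff]
    ring

lemma ccaNe_le_add_two_of_adj (h : G.Adj u v) (t : ℕ) :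
    (ccaNe G X₀ t u : ℤ) ≤ ccaNe G X₀ t v + 2 := by
  have := dXcca_ccaTraj (X₀ := X₀) h t
  have := abs_le.mp (abs_dXcca_le_one (ccaTraj G X₀ t) u v)
  have := abs_le.mp (abs_dXcca_le_one X₀ u v)
  omega

lemma ccaNe_le_add_length (p : G.Walk u v) (t : ℕ) :
    (ccaNe G X₀ t u : ℤ) ≤ ccaNe G X₀ t v + 2 * p.length := by
  induction p with
  | nil => simp
  | cons h p ih =>
    have := ccaNe_le_add_two_of_adj (X₀ := X₀) h t
    rw [Walk.length_cons]
    omega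

lemma walkIntCCA_cons (X : V → ZMod 3) (h : G.Adj u v) (p : G.Walk v w) :
    walkIntCCA X (Walk.cons h p) = dXcca X u v + walkIntCCA X p := by
  simp [walkIntCCA]

lemma walkIntCCA_reverse (X : V → ZMod 3) (p : G.Walk u v) :
    walkIntCCA X p.reverse = -walkIntCCA X p := by
  rw [walkIntCCA, walkIntCCA, Walk.darts_reverse, List.map_reverse, List.sum_reverse, List.map_map,
    List.sum_neg, List.map_map]
  exact congrArg List.sum (List.map_congr_left fun d _ => dXcca_swap X _ _)

lemma walkIntCCA_ccaTraj (p : G.Walk u v) (t : ℕ) :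
    walkIntCCA (ccaTraj G X₀ t) p = walkIntCCA X₀ p + ccaNe G X₀ t v - ccaNe G X₀ t u := by
  induction p with
  | nil => simp [walkIntCCA]
  | cons h p ih =>
    rw [walkIntCCA_cons, walkIntCCA_cons, ih, dXcca_ccaTraj h]
    ring

lemma walkIntCCA_ccaTraj_of_closed (c : G.Walk v v) (t : ℕ) :
    walkIntCCA (ccaTraj G X₀ t) c = walkIntCCA X₀ c := by
  rw [walkIntCCA_ccaTraj]
  ring

lemma walkIntCCA_le_sum_excited (p : G.Walk u v) :
    walkIntCCA X p ≤ (p.darts.map fun d => if ccaStep G X d.fst = X d.fst + 1 then 1 else 0).sum :=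
  List.sum_le_sum fun d _ => dXcca_le_of_adj d.adj

lemma walkIntCCA_mul_le_sum_ccaNe (c : G.Walk v v) (t : ℕ) :
    walkIntCCA X₀ c * t ≤ (c.darts.map fun d => (ccaNe G X₀ t d.fst : ℤ)).sum := by
  induction t with
  | zero => simp [ccaNe]
  | succ t ih =>
    have hstep := walkIntCCA_le_sum_excited (G := G) (X := ccaTraj G X₀ t) c
    simp only [← ccaExcited_iff, walkIntCCA_ccaTraj_of_closed] at hstep
    simp only [ccaNe_succ, List.sum_map_add]
    push_cast
    linarith

lemma sum_ccaNe_fst_le (c : G.Walk v v) (p : G.Walk v x) (t : ℕ) :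
    (c.darts.map fun d => (ccaNe G X₀ t d.fst : ℤ)).sum
      ≤ c.length * (ccaNe G X₀ t x + 2 * (c.length + p.length)) := by
  have hbound : ∀ d ∈ c.darts,
      (ccaNe G X₀ t d.fst : ℤ) ≤ ccaNe G X₀ t x + 2 * (c.length + p.length) := by
    intro d hd
    have hmem := c.dart_fst_mem_support_of_mem_darts hd
    have := ccaNe_le_add_length (X₀ := X₀) ((c.dropUntil _ hmem).append p) t
    have := c.length_dropUntil_le_length hmem
    rw [Walk.length_append] at *
    omega
  simpa using List.sum_le_card_nsmul _ _ (List.forall_mem_map.mpr hbound)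

lemma walkIntCCA_mul_le_length_mul (X₀ : V → ZMod 3) (c : G.Walk v v) (p : G.Walk v x) (t : ℕ) :
    walkIntCCA X₀ c * t ≤ c.length * (ccaNe G X₀ t x + 2 * (c.length + p.length)) :=
  (walkIntCCA_mul_le_sum_ccaNe c t).trans (sum_ccaNe_fst_le c p t)

end CCA

lemma le_limsup_div_of_mul_le {u : ℕ → ℝ} {a L C : ℝ} (hL : 0 < L)
    (h : ∀ t : ℕ, a * t ≤ L * u t + C) (hbdd : IsBoundedUnder (· ≤ ·) atTop fun t : ℕ => u t / t) :
    a / L ≤ limsup (fun t : ℕ => u t / t) atTop := by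
  have hlim : Tendsto (fun t : ℕ => a / L - C / L / t) atTop (nhds (a / L)) := by
    simpa using tendsto_const_nhds.sub (tendsto_const_div_atTop_nhds_zero_nat (C / L))
  have hle : ∀ᶠ t : ℕ in atTop, a / L - C / L / t ≤ u t / t := by
    filter_upwards [eventually_gt_atTop 0] with t ht
    have ht : (0 : ℝ) < t := Nat.cast_pos.mpr ht
    have hgap : u t / t - (a / L - C / L / t) = (L * u t + C - a * t) / (L * t) := by
      field_simp
      ring
    rw [← sub_nonneg, hgap]
    exact div_nonneg (by linarith [h t]) (by positivity)
  calc a / L = limsup (fun t : ℕ => a / L - C / L / t) atTop := hlim.limsup_eq.symm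
    _ ≤ _ := limsup_le_limsup hle hlim.isCoboundedUnder_le hbdd

theorem cca_activity_lower_bound_of_nonsingular_cycle_general (G : SimpleGraph V)
    (hconn : G.Connected)
    (X₀ : V → ZMod 3) (v : V) (c : G.Walk v v) (hc : c.IsCycle) :
    ∀ x : V, (|walkIntCCA X₀ c| : ℝ) / (c.length : ℝ) ≤
      limsup (fun t : ℕ => (ccaNe G X₀ t x : ℝ) / t) atTop := by
  intro x
  obtain ⟨p⟩ := hconn.preconnected v x
  obtain ⟨c', hlen, hint⟩ : ∃ c' : G.Walk v v,
      c'.length = c.length ∧ walkIntCCA X₀ c' = |walkIntCCA X₀ c| := by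
    rcases abs_choice (walkIntCCA X₀ c) with h | h
    · exact ⟨c, rfl, h.symm⟩
    · exact ⟨c.reverse, c.length_reverse, by rw [walkIntCCA_reverse, h]⟩
  have hL : (0 : ℝ) < c.length := Nat.cast_pos.mpr (lt_of_lt_of_le (by norm_num) hc.three_le_length)
  refine le_limsup_div_of_mul_le hL (C := c.length * (2 * (c.length + p.length))) (fun t => ?_)
    (isBoundedUnder_of ⟨1, fun t => div_le_one_of_le₀ (mod_cast ccaNe_le G X₀ t x) t.cast_nonneg⟩)
  have hint_le := walkIntCCA_mul_le_length_mul X₀ c' p t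
  rw [hint, hlen] at hint_le
  have hint_le_real : (|walkIntCCA X₀ c| : ℝ) * t
      ≤ c.length * (ccaNe G X₀ t x + 2 * (c.length + p.length)) := by exact_mod_cast hint_le
  linarith

/-- Lower bound for the activity: if some directed cycle `c` has nonzero contour integral
of `dX₀`, then at every vertex the activity is at least `|∮_c dX₀| / |V(c)|`. -/
theorem cca_activity_lower_bound_of_nonsingular_cycle (G : SimpleGraph V)
    (hlf : ∀ v : V, (G.neighborSet v).Finite) (hconn : G.Connected)
    (X₀ : V → ZMod 3) (v : V) (c : G.Walk v v) (hc : c.IsCycle)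
    (hnz : walkIntCCA X₀ c ≠ 0) :
    ∀ x : V, (|walkIntCCA X₀ c| : ℝ) / (c.length : ℝ) ≤
      limsup (fun t : ℕ => (ccaNe G X₀ t x : ℝ) / t) atTop :=
  cca_activity_lower_bound_of_nonsingular_cycle_general G hconn X₀ v c hc
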